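/- arXiv:1106.0620 — 2 statements merged into one kernel-verified Lean document; each statement's English description precedes it below -/
import Mathlib

section
/- Let φ : ℝ² → ℝ² be differentiable at x with invertible Jacobian Dφ(x), let q : ℝ² → ℝ³ be differentiable and regular at φ(x) (so that g(q)(φ(x)) is positive definite and hence invertible), and let u, v : ℝ² → ℝ be differentiable at φ(x). Then the cometric pairing of differentials is invariant under reparametrization: Σ_{i,j=1}^{2} g^{ij}(q∘φ)(x) · ∂ᵢ(u∘φ)(x) · ∂ⱼ(v∘φ)(x) = Σ_{i,j=1}^{2} g^{ij}(q)(φ(x)) · ∂ᵢu(φ(x)) · ∂ⱼv(φ(x)), where (g^{ij}) denotes the entries of the inverse of the first fundamental form matrix. -/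
open Matrix

/-- The `i`-th partial derivative of a map `q : ℝ² → ℝ³` at `x`. -/
noncomputable def partialDeriv (q : (Fin 2 → ℝ) → Fin 3 → ℝ) (x : Fin 2 → ℝ) (i : Fin 2) :
    Fin 3 → ℝ :=
  fderiv ℝ q x (Pi.single i 1)

/-- The `i`-th partial derivative of a scalar function `u : ℝ² → ℝ` at `x`. -/
noncomputable def partialDerivS (u : (Fin 2 → ℝ) → ℝ) (x : Fin 2 → ℝ) (i : Fin 2) : ℝ :=
  fderiv ℝ u x (Pi.single i 1)

/-- The first fundamental form matrix `g(q)(x)` with entries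
`g_{ij}(x) = ⟨∂ᵢq(x), ∂ⱼq(x)⟩` (Euclidean inner product on ℝ³). -/
noncomputable def firstFF (q : (Fin 2 → ℝ) → Fin 3 → ℝ) (x : Fin 2 → ℝ) :
    Matrix (Fin 2) (Fin 2) ℝ :=
  Matrix.of fun i j => partialDeriv q x i ⬝ᵥ partialDeriv q x j

/-- The Jacobian matrix `Dφ(x)` of a map `φ : ℝ² → ℝ²` at `x`. -/
noncomputable def jacobian (φ : (Fin 2 → ℝ) → Fin 2 → ℝ) (x : Fin 2 → ℝ) :
    Matrix (Fin 2) (Fin 2) ℝ :=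
  LinearMap.toMatrix' (fderiv ℝ φ x : (Fin 2 → ℝ) →ₗ[ℝ] (Fin 2 → ℝ))

/-! With `J = Dφ(x)`, the chain rule gives `g(q ∘ φ)(x) = Jᵀ g(q)(φ x) J` and
`∇(u ∘ φ)(x) = Jᵀ ∇u(φ x)`, so in the pairing `(Jᵀa)ᵀ (Jᵀ G J)⁻¹ (Jᵀb)` the factors of `J`
cancel against their inverses, leaving `aᵀ G⁻¹ b`. -/

theorem LinearMap.apply_eq_sum_smul_apply_single {ι R M : Type*} [Fintype ι] [DecidableEq ι]
    [CommSemiring R] [AddCommMonoid M] [Module R M] (f : (ι → R) →ₗ[R] M) (w : ι → R) :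
    f w = ∑ k, w k • f (Pi.single k 1) := by
  conv_lhs => rw [← (LinearEquiv.piRing R M ι R).symm_apply_apply f]
  exact LinearEquiv.piRing_symm_apply (S := R) _ w

theorem Matrix.sum_sum_mul_mul_eq_dotProduct_mulVec {n R : Type*} [Fintype n] [CommSemiring R]
    (M : Matrix n n R) (a b : n → R) :
    ∑ i, ∑ j, M i j * a i * b j = a ⬝ᵥ (M *ᵥ b) := by
  simp only [dotProduct, mulVec, Finset.mul_sum]
  exact Finset.sum_congr rfl fun i _ => Finset.sum_congr rfl fun j _ => by ring

theorem Matrix.dotProduct_inv_transpose_mul_mul_mulVec {n R : Type*} [Fintype n] [DecidableEq n]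
    [CommRing R] (G J : Matrix n n R) (hJ : IsUnit J.det) (a b : n → R) :
    (a ᵥ* J) ⬝ᵥ ((Jᵀ * G * J)⁻¹ *ᵥ (b ᵥ* J)) = a ⬝ᵥ (G⁻¹ *ᵥ b) := by
  have hJt : IsUnit Jᵀ.det := by rwa [det_transpose]
  have hconj : J * (Jᵀ * G * J)⁻¹ * Jᵀ = G⁻¹ := by
    rw [mul_inv_rev, mul_inv_rev, ← mul_assoc, ← mul_assoc, mul_nonsing_inv _ hJ, one_mul,
      mul_assoc, nonsing_inv_mul _ hJt, mul_one]
  rw [← dotProduct_mulVec, ← mulVec_transpose, mulVec_mulVec, mulVec_mulVec, hconj]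

noncomputable def fderivMatrix {m n : ℕ} (f : (Fin n → ℝ) → Fin m → ℝ) (x : Fin n → ℝ) :
    Matrix (Fin m) (Fin n) ℝ :=
  LinearMap.toMatrix' (fderiv ℝ f x : (Fin n → ℝ) →ₗ[ℝ] Fin m → ℝ)

theorem fderivMatrix_comp {l m n : ℕ} {f : (Fin m → ℝ) → Fin l → ℝ}
    {g : (Fin n → ℝ) → Fin m → ℝ} {x : Fin n → ℝ} (hf : DifferentiableAt ℝ f (g x))
    (hg : DifferentiableAt ℝ g x) :
    fderivMatrix (f ∘ g) x = fderivMatrix f (g x) * fderivMatrix g x := by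
  rw [fderivMatrix, fderiv_comp x hf hg, ContinuousLinearMap.toLinearMap_comp,
    LinearMap.toMatrix'_comp, fderivMatrix, fderivMatrix]

theorem firstFF_eq_transpose_mul (q : (Fin 2 → ℝ) → Fin 3 → ℝ) (x : Fin 2 → ℝ) :
    firstFF q x = (fderivMatrix q x)ᵀ * fderivMatrix q x := by
  ext i j
  simp only [firstFF, of_apply, mul_apply, transpose_apply, dotProduct, fderivMatrix,
    LinearMap.toMatrix'_apply, ContinuousLinearMap.coe_coe, partialDeriv]

section Reparametrization

variable {φ : (Fin 2 → ℝ) → Fin 2 → ℝ} {x : Fin 2 → ℝ}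

theorem firstFF_comp {q : (Fin 2 → ℝ) → Fin 3 → ℝ} (hq : DifferentiableAt ℝ q (φ x))
    (hφ : DifferentiableAt ℝ φ x) :
    firstFF (q ∘ φ) x = (jacobian φ x)ᵀ * firstFF q (φ x) * jacobian φ x := by
  rw [firstFF_eq_transpose_mul, firstFF_eq_transpose_mul, fderivMatrix_comp hq hφ,
    transpose_mul, jacobian, ← fderivMatrix]
  simp only [Matrix.mul_assoc]

theorem partialDerivS_comp {u : (Fin 2 → ℝ) → ℝ} (hu : DifferentiableAt ℝ u (φ x))
    (hφ : DifferentiableAt ℝ φ x) :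
    partialDerivS (u ∘ φ) x = partialDerivS u (φ x) ᵥ* jacobian φ x := by
  ext i
  rw [partialDerivS, fderiv_comp x hu hφ, ContinuousLinearMap.comp_apply,
    ← ContinuousLinearMap.coe_coe (fderiv ℝ u (φ x)),
    LinearMap.apply_eq_sum_smul_apply_single]
  simp only [vecMul, dotProduct, jacobian, LinearMap.toMatrix'_apply, smul_eq_mul,
    ContinuousLinearMap.coe_coe, partialDerivS, mul_comm]

end Reparametrization

theorem cometric_pairing_reparam_invariant_general (φ : (Fin 2 → ℝ) → Fin 2 → ℝ)
    (q : (Fin 2 → ℝ) → Fin 3 → ℝ) (u v : (Fin 2 → ℝ) → ℝ) (x : Fin 2 → ℝ)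
    (hφ : DifferentiableAt ℝ φ x) (hφ' : IsUnit (jacobian φ x))
    (hq : DifferentiableAt ℝ q (φ x))
    (hu : DifferentiableAt ℝ u (φ x)) (hv : DifferentiableAt ℝ v (φ x)) :
    ∑ i : Fin 2, ∑ j : Fin 2, (firstFF (q ∘ φ) x)⁻¹ i j *
        partialDerivS (u ∘ φ) x i * partialDerivS (v ∘ φ) x j =
      ∑ i : Fin 2, ∑ j : Fin 2, (firstFF q (φ x))⁻¹ i j *
        partialDerivS u (φ x) i * partialDerivS v (φ x) j := by
  rw [sum_sum_mul_mul_eq_dotProduct_mulVec, sum_sum_mul_mul_eq_dotProduct_mulVec,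
    firstFF_comp hq hφ, partialDerivS_comp hu hφ, partialDerivS_comp hv hφ]
  exact dotProduct_inv_transpose_mul_mul_mulVec _ _ ((isUnit_iff_isUnit_det _).1 hφ') _ _

/-- let `φ : ℝ² → ℝ²` be differentiable at `x` with invertible
Jacobian `Dφ(x)`, let `q : ℝ² → ℝ³` be differentiable and regular at `φ(x)`
(so that `g(q)(φ(x))` is positive definite and hence invertible), and let
`u, v : ℝ² → ℝ` be differentiable at `φ(x)`. Then the cometric pairing of
differentials is invariant under reparametrization:
`Σᵢⱼ g^{ij}(q∘φ)(x) ∂ᵢ(u∘φ)(x) ∂ⱼ(v∘φ)(x) = Σᵢⱼ g^{ij}(q)(φ(x)) ∂ᵢu(φ(x)) ∂ⱼv(φ(x))`,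
where `(g^{ij})` is the inverse of the first fundamental form matrix. -/
theorem cometric_pairing_reparam_invariant (φ : (Fin 2 → ℝ) → Fin 2 → ℝ)
    (q : (Fin 2 → ℝ) → Fin 3 → ℝ) (u v : (Fin 2 → ℝ) → ℝ) (x : Fin 2 → ℝ)
    (hφ : DifferentiableAt ℝ φ x) (hφ' : IsUnit (jacobian φ x))
    (hq : DifferentiableAt ℝ q (φ x))
    (hreg : LinearIndependent ℝ (fun i : Fin 2 => partialDeriv q (φ x) i))
    (hu : DifferentiableAt ℝ u (φ x)) (hv : DifferentiableAt ℝ v (φ x)) :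
    ∑ i : Fin 2, ∑ j : Fin 2, (firstFF (q ∘ φ) x)⁻¹ i j *
        partialDerivS (u ∘ φ) x i * partialDerivS (v ∘ φ) x j =
      ∑ i : Fin 2, ∑ j : Fin 2, (firstFF q (φ x))⁻¹ i j *
        partialDerivS u (φ x) i * partialDerivS v (φ x) j :=
  cometric_pairing_reparam_invariant_general φ q u v x hφ hφ' hq hu hv
end

section
/- Let m ∈ ℕ, Δt > 0, N ≥ 1, and let b : ℝᵐ → Matₘ(ℝ) be a differentiable map whose value b(ξ) at every ξ ∈ ℝᵐ is a symmetric positive definite m×m matrix. Define E : (ℝᵐ)^N × (ℝᵐ)^N × (ℝᵐ)^{N+1} → ℝ by E(u, p, q) = Σ_{i=0}^{N-1} [ (Δt/2) ⟨b(qᵢ) uᵢ, uᵢ⟩ + ⟨pᵢ, q_{i+1} − qᵢ − Δt uᵢ⟩ ], where ⟨·,·⟩ is the Euclidean inner product on ℝᵐ. Suppose (u, p, q) is a critical point of E in the sense that all partial derivatives of E with respect to each uᵢ (0 ≤ i ≤ N−1), each pᵢ (0 ≤ i ≤ N−1), and each interior qᵢ (1 ≤ i ≤ N−1) vanish. Then: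 (a) q_{i+1} = qᵢ + Δt·uᵢ for all 0 ≤ i ≤ N−1; (b) pᵢ = b(qᵢ) uᵢ for all 0 ≤ i ≤ N−1; and (c) for all 0 ≤ i ≤ N−2 and all w ∈ ℝᵐ, ⟨b(q_{i+1}) u_{i+1}, w⟩ = ⟨b(qᵢ) uᵢ, w⟩ + (Δt/2) ⟨(Db(q_{i+1})[w]) u_{i+1}, u_{i+1}⟩, where Db(ξ)[w] denotes the derivative of b at ξ in the direction w. -/
/-!
Every criticality hypothesis is the derivative at `t = 0` of `E` along a line that moves a single
slot `xᵢ ↦ xᵢ + t w`, i.e. along the direction `Pi.single i w`. As `E` is a sum of terms each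
depending only on `uₖ, pₖ, qₖ, qₖ₊₁`, these derivatives are computed termwise, and for a single
slot at most two terms survive. The multiplier condition reads `⟨q_{i+1} − qᵢ − Δt uᵢ, w⟩ = 0`
and, thanks to the symmetry of `b(qᵢ)`, the velocity condition reads
`Δt ⟨b(qᵢ)uᵢ − pᵢ, w⟩ = 0`; both hold for all `w`, giving (a) and (b). The condition at the
interior node `q_{i+1}` is `(Δt/2)⟨Db(q_{i+1})[w] u_{i+1}, u_{i+1}⟩ + ⟨pᵢ − p_{i+1}, w⟩ = 0`,
which becomes (c) once (b) is substituted.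
-/

open Matrix

/-- The discrete action
`E(u, p, q) = Σ_{i=0}^{N-1} (Δt/2)⟨b(qᵢ)uᵢ, uᵢ⟩ + ⟨pᵢ, q_{i+1} − qᵢ − Δt uᵢ⟩`,
where `⟨·,·⟩` is the Euclidean inner product on `ℝᵐ`. -/
noncomputable def discreteEnergy (m N : ℕ) (Δt : ℝ)
    (b : (Fin m → ℝ) → Matrix (Fin m) (Fin m) ℝ)
    (u p : Fin N → Fin m → ℝ) (q : Fin (N + 1) → Fin m → ℝ) : ℝ :=
  ∑ i : Fin N,
    (Δt / 2 * ((b (q i.castSucc) *ᵥ u i) ⬝ᵥ u i) +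
      p i ⬝ᵥ (q i.succ - q i.castSucc - Δt • u i))

/-- The directional derivative `Db(ξ)[w]` of a matrix-valued map `b` at `ξ` in the
direction `w`, taken entrywise. -/
noncomputable def matrixDirDeriv (m : ℕ) (b : (Fin m → ℝ) → Matrix (Fin m) (Fin m) ℝ)
    (ξ w : Fin m → ℝ) : Matrix (Fin m) (Fin m) ℝ :=
  Matrix.of fun i j => fderiv ℝ (fun ζ => b ζ i j) ξ w

theorem update_add_smul_eq_add_smul_single {ι R M : Type*} [DecidableEq ι] [Semiring R]
    [AddCommMonoid M] [Module R M] (x : ι → M) (i : ι) (t : R) (w : M) :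
    Function.update x i (x i + t • w) = x + t • (Pi.single i w : ι → M) := by
  ext j
  rcases eq_or_ne j i with rfl | h <;> simp [*]

theorem Matrix.IsSymm.mulVec_dotProduct_comm {n R : Type*} [Fintype n] [CommSemiring R]
    {B : Matrix n n R} (hB : B.IsSymm) (v w : n → R) :
    (B *ᵥ v) ⬝ᵥ w = (B *ᵥ w) ⬝ᵥ v := by
  rw [dotProduct_comm, dotProduct_mulVec, ← mulVec_transpose, hB.eq]

section LineDerivatives

variable {𝕜 n : Type*} [NontriviallyNormedField 𝕜] [Fintype n]

theorem hasDerivAt_dotProduct_add_smul (a v w : n → 𝕜) :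
    HasDerivAt (fun t : 𝕜 => a ⬝ᵥ (v + t • w)) (a ⬝ᵥ w) 0 := by
  simp only [dotProduct_add, dotProduct_smul, smul_eq_mul]
  simpa using ((hasDerivAt_id (0 : 𝕜)).mul_const (a ⬝ᵥ w)).const_add (a ⬝ᵥ v)

theorem hasDerivAt_mulVec_add_smul_dotProduct (B : Matrix n n 𝕜) (v w : n → 𝕜) :
    HasDerivAt (fun t : 𝕜 => (B *ᵥ (v + t • w)) ⬝ᵥ (v + t • w))
      ((B *ᵥ w) ⬝ᵥ v + (B *ᵥ v) ⬝ᵥ w) 0 := by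
  have hpoly : (fun t : 𝕜 => (B *ᵥ (v + t • w)) ⬝ᵥ (v + t • w)) = fun t =>
      (B *ᵥ v) ⬝ᵥ v + t * ((B *ᵥ w) ⬝ᵥ v + (B *ᵥ v) ⬝ᵥ w) + t * t * ((B *ᵥ w) ⬝ᵥ w) := by
    funext t
    simp only [mulVec_add, mulVec_smul, add_dotProduct, dotProduct_add, smul_dotProduct,
      dotProduct_smul, smul_eq_mul]
    ring
  have h := hasDerivAt_id (0 : 𝕜)
  rw [hpoly]
  exact (((h.mul_const _).const_add _).add ((h.mul h).mul_const _)).congr_deriv (by simp)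

theorem hasDerivAt_apply_add_smul {E F : Type*} [NormedAddCommGroup E] [NormedSpace 𝕜 E]
    [NormedAddCommGroup F] [NormedSpace 𝕜 F] {g : E → F} {ξ : E} (hg : DifferentiableAt 𝕜 g ξ)
    (w : E) : HasDerivAt (fun t : 𝕜 => g (ξ + t • w)) (fderiv 𝕜 g ξ w) 0 := by
  have hline : HasDerivAt (fun t : 𝕜 => ξ + t • w) w 0 := by
    simpa using ((hasDerivAt_id (0 : 𝕜)).smul_const w).const_add ξ
  exact hg.hasFDerivAt.comp_hasDerivAt_of_eq 0 hline (by simp)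

end LineDerivatives

theorem hasDerivAt_comp_add_smul_mulVec_dotProduct {m : ℕ}
    (b : (Fin m → ℝ) → Matrix (Fin m) (Fin m) ℝ)
    {ξ : Fin m → ℝ} (hb : ∀ i j : Fin m, DifferentiableAt ℝ (fun ζ : Fin m → ℝ => b ζ i j) ξ)
    (w v : Fin m → ℝ) :
    HasDerivAt (fun t : ℝ => (b (ξ + t • w) *ᵥ v) ⬝ᵥ v)
      ((matrixDirDeriv m b ξ w *ᵥ v) ⬝ᵥ v) 0 := by
  simp only [mulVec, dotProduct, matrixDirDeriv, Matrix.of_apply, Finset.sum_mul]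
  refine HasDerivAt.fun_sum fun i _ => HasDerivAt.fun_sum fun j _ => ?_
  exact ((hasDerivAt_apply_add_smul (hb i j) w).mul_const (v j)).mul_const (v i)

@[simp]
theorem matrixDirDeriv_zero {m : ℕ} (b : (Fin m → ℝ) → Matrix (Fin m) (Fin m) ℝ)
    (ξ : Fin m → ℝ) : matrixDirDeriv m b ξ 0 = 0 := by
  ext; simp [matrixDirDeriv]

section DiscreteEnergy

variable {m N : ℕ} (Δt : ℝ) (b : (Fin m → ℝ) → Matrix (Fin m) (Fin m) ℝ)
  (u p : Fin N → Fin m → ℝ) (q : Fin (N + 1) → Fin m → ℝ)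

theorem hasDerivAt_discreteEnergy_velocity (V : Fin N → Fin m → ℝ) :
    HasDerivAt (fun t : ℝ => discreteEnergy m N Δt b (u + t • V) p q)
      (∑ k, (Δt / 2 * ((b (q k.castSucc) *ᵥ V k) ⬝ᵥ u k + (b (q k.castSucc) *ᵥ u k) ⬝ᵥ V k)
        + p k ⬝ᵥ (-Δt • V k))) 0 := by
  refine HasDerivAt.fun_sum fun k _ => ?_
  simp only [Pi.add_apply, Pi.smul_apply]
  have hconstraint (t : ℝ) : q k.succ - q k.castSucc - Δt • (u k + t • V k) =
      q k.succ - q k.castSucc - Δt • u k + t • (-Δt • V k) := by module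
  simp only [hconstraint]
  exact ((hasDerivAt_mulVec_add_smul_dotProduct _ _ _).const_mul _).add
    (hasDerivAt_dotProduct_add_smul _ _ _)

theorem hasDerivAt_discreteEnergy_multiplier (P : Fin N → Fin m → ℝ) :
    HasDerivAt (fun t : ℝ => discreteEnergy m N Δt b u (p + t • P) q)
      (∑ k, P k ⬝ᵥ (q k.succ - q k.castSucc - Δt • u k)) 0 := by
  refine HasDerivAt.fun_sum fun k _ => ?_
  simp only [Pi.add_apply, Pi.smul_apply, dotProduct_comm _ (q k.succ - _ - _)]
  exact (hasDerivAt_dotProduct_add_smul _ _ _).const_add _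

theorem hasDerivAt_discreteEnergy_position
    (hb : ∀ i j : Fin m, Differentiable ℝ (fun ξ : Fin m → ℝ => b ξ i j))
    (W : Fin (N + 1) → Fin m → ℝ) :
    HasDerivAt (fun t : ℝ => discreteEnergy m N Δt b u p (q + t • W))
      (∑ k, (Δt / 2 * ((matrixDirDeriv m b (q k.castSucc) (W k.castSucc) *ᵥ u k) ⬝ᵥ u k)
        + p k ⬝ᵥ (W k.succ - W k.castSucc))) 0 := by
  refine HasDerivAt.fun_sum fun k _ => ?_
  simp only [Pi.add_apply, Pi.smul_apply]
  have hconstraint (t : ℝ) :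
      q k.succ + t • W k.succ - (q k.castSucc + t • W k.castSucc) - Δt • u k =
        q k.succ - q k.castSucc - Δt • u k + t • (W k.succ - W k.castSucc) := by module
  simp only [hconstraint]
  exact ((hasDerivAt_comp_add_smul_mulVec_dotProduct b
    (fun i j => (hb i j).differentiableAt) _ _).const_mul _).add
    (hasDerivAt_dotProduct_add_smul _ _ _)

theorem deriv_discreteEnergy_update_multiplier (i : Fin N) (w : Fin m → ℝ) :
    deriv (fun t : ℝ =>
      discreteEnergy m N Δt b u (Function.update p i (p i + t • w)) q) 0 =
        w ⬝ᵥ (q i.succ - q i.castSucc - Δt • u i) := by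
  simp only [update_add_smul_eq_add_smul_single]
  rw [(hasDerivAt_discreteEnergy_multiplier Δt b u p q _).deriv,
    Finset.sum_eq_single i (fun k _ hk => by simp [hk]) (by simp)]
  simp

theorem deriv_discreteEnergy_update_velocity (hsymm : ∀ ξ, (b ξ).IsSymm) (i : Fin N)
    (w : Fin m → ℝ) :
    deriv (fun t : ℝ =>
      discreteEnergy m N Δt b (Function.update u i (u i + t • w)) p q) 0 =
        Δt * ((b (q i.castSucc) *ᵥ u i - p i) ⬝ᵥ w) := by
  simp only [update_add_smul_eq_add_smul_single]
  rw [(hasDerivAt_discreteEnergy_velocity Δt b u p q _).deriv,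
    Finset.sum_eq_single i (fun k _ hk => by simp [hk]) (by simp)]
  simp only [Pi.single_eq_same, (hsymm _).mulVec_dotProduct_comm w, sub_dotProduct,
    dotProduct_smul, smul_eq_mul]
  ring

theorem deriv_discreteEnergy_update_position_succ
    (hb : ∀ i j : Fin m, Differentiable ℝ (fun ξ : Fin m → ℝ => b ξ i j))
    (i : Fin N) (hi : (i : ℕ) + 1 < N) (w : Fin m → ℝ) :
    deriv (fun t : ℝ =>
      discreteEnergy m N Δt b u p (Function.update q i.succ (q i.succ + t • w))) 0 =
        Δt / 2 * ((matrixDirDeriv m b (q i.succ) w *ᵥ u ⟨(i : ℕ) + 1, hi⟩) ⬝ᵥ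
          u ⟨(i : ℕ) + 1, hi⟩) + (p i - p ⟨(i : ℕ) + 1, hi⟩) ⬝ᵥ w := by
  set i' : Fin N := ⟨(i : ℕ) + 1, hi⟩
  have hsucc : i.succ = i'.castSucc := rfl
  have hcastSucc (k : Fin N) : k.castSucc = i.succ ↔ k = i' := by
    rw [hsucc, Fin.castSucc_inj]
  simp only [update_add_smul_eq_add_smul_single]
  rw [(hasDerivAt_discreteEnergy_position Δt b u p q hb _).deriv, Finset.sum_add_distrib,
    Finset.sum_eq_single i' (fun k _ hk => by simp [hcastSucc, hk]) (by simp)]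
  simp only [dotProduct_sub, Finset.sum_sub_distrib]
  rw [Finset.sum_eq_single i (fun k _ hk => by simp [hk]) (by simp),
    Finset.sum_eq_single i' (fun k _ hk => by simp [hcastSucc, hk]) (by simp)]
  simp [hsucc, sub_dotProduct]

end DiscreteEnergy

theorem discrete_variational_principle_general (m N : ℕ) (Δt : ℝ) (hΔt : 0 < Δt)
    (b : (Fin m → ℝ) → Matrix (Fin m) (Fin m) ℝ)
    (hb : ∀ i j : Fin m, Differentiable ℝ (fun ξ : Fin m → ℝ => b ξ i j))
    (hbpos : ∀ ξ : Fin m → ℝ, (b ξ).PosDef)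
    (u p : Fin N → Fin m → ℝ) (q : Fin (N + 1) → Fin m → ℝ)
    (hcrit_u : ∀ (i : Fin N) (w : Fin m → ℝ),
      deriv (fun t : ℝ =>
        discreteEnergy m N Δt b (Function.update u i (u i + t • w)) p q) 0 = 0)
    (hcrit_p : ∀ (i : Fin N) (w : Fin m → ℝ),
      deriv (fun t : ℝ =>
        discreteEnergy m N Δt b u (Function.update p i (p i + t • w)) q) 0 = 0)
    (hcrit_q : ∀ (i : Fin (N + 1)), i ≠ 0 → i ≠ Fin.last N → ∀ w : Fin m → ℝ,
      deriv (fun t : ℝ =>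
        discreteEnergy m N Δt b u p (Function.update q i (q i + t • w))) 0 = 0) :
    (∀ i : Fin N, q i.succ = q i.castSucc + Δt • u i) ∧
    (∀ i : Fin N, p i = b (q i.castSucc) *ᵥ u i) ∧
    (∀ (i : Fin N) (hi : (i : ℕ) + 1 < N) (w : Fin m → ℝ),
      (b (q i.succ) *ᵥ u ⟨(i : ℕ) + 1, hi⟩) ⬝ᵥ w =
        (b (q i.castSucc) *ᵥ u i) ⬝ᵥ w +
          Δt / 2 * ((matrixDirDeriv m b (q i.succ) w *ᵥ u ⟨(i : ℕ) + 1, hi⟩) ⬝ᵥ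
            u ⟨(i : ℕ) + 1, hi⟩)) := by
  have hsymm (ξ : Fin m → ℝ) : (b ξ).IsSymm := isHermitian_iff_isSymm.1 (hbpos ξ).isHermitian
  have hconstraint (i : Fin N) : q i.succ - q i.castSucc - Δt • u i = 0 :=
    dotProduct_eq_zero _ fun w => by
      rw [dotProduct_comm, ← deriv_discreteEnergy_update_multiplier, hcrit_p]
  have hmomentum (i : Fin N) : p i = b (q i.castSucc) *ᵥ u i := by
    refine (sub_eq_zero.1 (dotProduct_eq_zero _ fun w => ?_)).symm
    have h := hcrit_u i w
    rw [deriv_discreteEnergy_update_velocity Δt b u p q hsymm] at h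
    exact (mul_eq_zero.1 h).resolve_left hΔt.ne'
  refine ⟨fun i => by rw [← sub_eq_zero, ← sub_sub, hconstraint], hmomentum, fun i hi w => ?_⟩
  have h := hcrit_q i.succ (Fin.succ_ne_zero i) (by simp [Fin.ext_iff]; omega) w
  rw [deriv_discreteEnergy_update_position_succ Δt b u p q hb i hi, hmomentum, hmomentum,
    sub_dotProduct, show Fin.castSucc ⟨(i : ℕ) + 1, hi⟩ = i.succ from rfl] at h
  linarith

/-- let `Δt > 0`, `N ≥ 1`, and let `b : ℝᵐ → Matₘ(ℝ)` be a
differentiable field of symmetric positive definite matrices. If `(u, p, q)` is a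
critical point of the discrete action `E` — all partial derivatives of `E` with
respect to each `uᵢ` (`0 ≤ i ≤ N−1`), each `pᵢ` (`0 ≤ i ≤ N−1`) and each interior
`qᵢ` (`1 ≤ i ≤ N−1`) vanish — then:
(a) `q_{i+1} = qᵢ + Δt·uᵢ` for all `0 ≤ i ≤ N−1`;
(b) `pᵢ = b(qᵢ)uᵢ` for all `0 ≤ i ≤ N−1`;
(c) for all `0 ≤ i ≤ N−2` and all `w ∈ ℝᵐ`,
`⟨b(q_{i+1})u_{i+1}, w⟩ = ⟨b(qᵢ)uᵢ, w⟩ + (Δt/2)⟨(Db(q_{i+1})[w])u_{i+1}, u_{i+1}⟩`. -/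
theorem discrete_variational_principle (m N : ℕ) (Δt : ℝ) (hΔt : 0 < Δt) (hN : 1 ≤ N)
    (b : (Fin m → ℝ) → Matrix (Fin m) (Fin m) ℝ)
    (hb : ∀ i j : Fin m, Differentiable ℝ (fun ξ : Fin m → ℝ => b ξ i j))
    (hbpos : ∀ ξ : Fin m → ℝ, (b ξ).PosDef)
    (u p : Fin N → Fin m → ℝ) (q : Fin (N + 1) → Fin m → ℝ)
    (hcrit_u : ∀ (i : Fin N) (w : Fin m → ℝ),
      deriv (fun t : ℝ =>
        discreteEnergy m N Δt b (Function.update u i (u i + t • w)) p q) 0 = 0)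
    (hcrit_p : ∀ (i : Fin N) (w : Fin m → ℝ),
      deriv (fun t : ℝ =>
        discreteEnergy m N Δt b u (Function.update p i (p i + t • w)) q) 0 = 0)
    (hcrit_q : ∀ (i : Fin (N + 1)), i ≠ 0 → i ≠ Fin.last N → ∀ w : Fin m → ℝ,
      deriv (fun t : ℝ =>
        discreteEnergy m N Δt b u p (Function.update q i (q i + t • w))) 0 = 0) :
    (∀ i : Fin N, q i.succ = q i.castSucc + Δt • u i) ∧
    (∀ i : Fin N, p i = b (q i.castSucc) *ᵥ u i) ∧
    (∀ (i : Fin N) (hi : (i : ℕ) + 1 < N) (w : Fin m → ℝ),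
      (b (q i.succ) *ᵥ u ⟨(i : ℕ) + 1, hi⟩) ⬝ᵥ w =
        (b (q i.castSucc) *ᵥ u i) ⬝ᵥ w +
          Δt / 2 * ((matrixDirDeriv m b (q i.succ) w *ᵥ u ⟨(i : ℕ) + 1, hi⟩) ⬝ᵥ
            u ⟨(i : ℕ) + 1, hi⟩)) :=
  discrete_variational_principle_general m N Δt hΔt b hb hbpos u p q hcrit_u hcrit_p hcrit_q
end
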